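/- Let ρ_AB = ⊕_i p_i ρ_{A B_i^L} ⊗ ω_{B_i^R} on H_A ⊗ (⊕_i H_{B_i^L} ⊗ H_{B_i^R}), where {p_i} is a probability distribution, ρ_{A B_i^L} are states on H_A ⊗ H_{B_i^L}, and ω_{B_i^R} are states on H_{B_i^R}. Then there exist CPTP maps E : B(H_B) → B(H_B̃) and R : B(H_B̃) → B(H_B), with H_B̃ := ⊕_i H_{B_i^L} (dimension Σ_i d_{B_i^L}), such that (id_A ⊗ R)∘(id_A ⊗ E)(ρ_AB) = ρ_AB; namely E traces out the R-factors within each block and R re-attaches the fixed states ω_{B_i^R}. -/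

import Mathlib

open Matrix
open scoped ComplexOrder

noncomputable def tensorId18 {γ ι κ : Type*}
    (L : Matrix ι ι ℂ → Matrix κ κ ℂ)
    (M : Matrix (γ × ι) (γ × ι) ℂ) : Matrix (γ × κ) (γ × κ) ℂ :=
  fun p q => L (fun i j => M (p.1, i) (q.1, j)) p.2 q.2

noncomputable def IsCPTP18 {ι κ : Type*} [Fintype ι] [Fintype κ]
    (L : Matrix ι ι ℂ →ₗ[ℂ] Matrix κ κ ℂ) : Prop :=
  (∀ X, (L X).trace = X.trace) ∧
  ∀ (d : ℕ) (M : Matrix (Fin d × ι) (Fin d × ι) ℂ), M.PosSemidef →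
    (tensorId18 (fun X => L X) M).PosSemidef

/-
Both maps act block by block: `E` is the partial trace over `B_i^R` on block `i` and `R`
is `Y ↦ Y ⊗ ω_i`. Since the partial trace of `A ⊗ ω` is `tr ω • A`, the composite fixes
every block-diagonal matrix with blocks `A_i ⊗ ω_i`, and every `A`-slice of `ρ_AB` is of
this form.
Complete positivity of a blockwise map reduces to that of its blocks, because `id ⊗ (⊕ Φ_i)`
applied to `M` is, after reordering the indices, block diagonal with blocks `(id ⊗ Φ_i)` of
compressions of `M`; the partial trace is a sum of compressions and `· ⊗ ω` is a Kronecker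
product with a positive semidefinite matrix.
-/

open scoped Kronecker

namespace Matrix

open scoped MatrixOrder in
theorem PosSemidef.blockDiagonal' {𝕜 ι : Type*} [RCLike 𝕜] [Fintype ι] [DecidableEq ι]
    {m : ι → Type*} [∀ i, Fintype (m i)] {M : ∀ i, Matrix (m i) (m i) 𝕜}
    (hM : ∀ i, (M i).PosSemidef) : (Matrix.blockDiagonal' M).PosSemidef := by
  classical
  choose B hB using fun i => CStarAlgebra.nonneg_iff_eq_star_mul_self.mp (hM i).nonneg
  rw [funext hB, blockDiagonal'_mul]
  simp only [star_eq_conjTranspose, ← blockDiagonal'_conjTranspose]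
  exact posSemidef_conjTranspose_mul_self _

variable {R : Type*} [CommSemiring R]

section PartialTrace

variable {l r : Type*}

variable (l r) in
def partialTraceRight [Fintype r] :
    Matrix (l × r) (l × r) R →ₗ[R] Matrix l l R where
  toFun X := of fun a b => ∑ k, X (a, k) (b, k)
  map_add' X Y := by ext; simp [Finset.sum_add_distrib]
  map_smul' c X := by ext; simp [Finset.mul_sum]

@[simp]
theorem partialTraceRight_apply [Fintype r] (X : Matrix (l × r) (l × r) R) (a b : l) :
    partialTraceRight l r X a b = ∑ k, X (a, k) (b, k) :=
  rfl

theorem trace_partialTraceRight [Fintype l] [Fintype r] (X : Matrix (l × r) (l × r) R) :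
    (partialTraceRight l r X).trace = X.trace := by
  simp [trace, Fintype.sum_prod_type]

theorem partialTraceRight_kronecker [Fintype r] (A : Matrix l l R) (B : Matrix r r R) :
    partialTraceRight l r (A ⊗ₖ B) = B.trace • A := by
  ext a b
  simp [trace, Finset.mul_sum, mul_comm]

def kroneckerRight (ω : Matrix r r R) : Matrix l l R →ₗ[R] Matrix (l × r) (l × r) R :=
  (kroneckerBilinear (R := R)).flip ω

@[simp]
theorem kroneckerRight_apply (ω : Matrix r r R) (Y : Matrix l l R) :
    kroneckerRight ω Y = Y ⊗ₖ ω :=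
  rfl

end PartialTrace

section BlockDiagonalMap

variable {ι : Type*} [DecidableEq ι] {m n : ι → Type*}

def blockDiagonalMap (Φ : ∀ i, Matrix (m i) (m i) R →ₗ[R] Matrix (n i) (n i) R) :
    Matrix (Σ i, m i) (Σ i, m i) R →ₗ[R] Matrix (Σ i, n i) (Σ i, n i) R where
  toFun X := blockDiagonal' fun i => Φ i (blockDiag' X i)
  map_add' X Y := by
    simp only [blockDiag'_add, Pi.add_apply, map_add]
    exact blockDiagonal'_add _ _
  map_smul' c X := by
    simp only [blockDiag'_smul, Pi.smul_apply, map_smul]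
    exact blockDiagonal'_smul c _

theorem blockDiagonalMap_apply (Φ : ∀ i, Matrix (m i) (m i) R →ₗ[R] Matrix (n i) (n i) R)
    (X : Matrix (Σ i, m i) (Σ i, m i) R) :
    blockDiagonalMap Φ X = blockDiagonal' fun i => Φ i (blockDiag' X i) :=
  rfl

theorem blockDiagonalMap_blockDiagonal'
    (Φ : ∀ i, Matrix (m i) (m i) R →ₗ[R] Matrix (n i) (n i) R)
    (A : ∀ i, Matrix (m i) (m i) R) :
    blockDiagonalMap Φ (blockDiagonal' A) = blockDiagonal' fun i => Φ i (A i) := by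
  rw [blockDiagonalMap_apply, blockDiag'_blockDiagonal']

theorem blockDiagonalMap_kroneckerRight_partialTraceRight {l r : ι → Type*}
    [∀ i, Fintype (r i)] {ω : ∀ i, Matrix (r i) (r i) R} (hω : ∀ i, (ω i).trace = 1)
    (A : ∀ i, Matrix (l i) (l i) R) :
    blockDiagonalMap (fun i => kroneckerRight (ω i))
        (blockDiagonalMap (fun i => partialTraceRight (l i) (r i))
          (blockDiagonal' fun i => A i ⊗ₖ ω i)) =
      blockDiagonal' fun i => A i ⊗ₖ ω i := by
  simp [blockDiagonalMap_blockDiagonal', partialTraceRight_kronecker, hω]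

theorem trace_blockDiagonalMap [Fintype ι] [∀ i, Fintype (m i)] [∀ i, Fintype (n i)]
    {Φ : ∀ i, Matrix (m i) (m i) R →ₗ[R] Matrix (n i) (n i) R}
    (hΦ : ∀ i X, (Φ i X).trace = X.trace) (X : Matrix (Σ i, m i) (Σ i, m i) R) :
    (blockDiagonalMap Φ X).trace = X.trace := by
  rw [blockDiagonalMap_apply, trace_blockDiagonal']
  simp only [hΦ]
  simp [trace, Fintype.sum_sigma, blockDiag'_apply]

end BlockDiagonalMap

end Matrix

section CompletelyPositive

variable {γ : Type*}

theorem tensorId18_apply {ι κ : Type*} (L : Matrix ι ι ℂ → Matrix κ κ ℂ)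
    (M : Matrix (γ × ι) (γ × ι) ℂ) (p q : γ × κ) :
    tensorId18 L M p q = L (of fun i j => M (p.1, i) (q.1, j)) p.2 q.2 :=
  rfl

theorem tensorId18_tensorId18 {ι κ μ : Type*} (L : Matrix κ κ ℂ → Matrix μ μ ℂ)
    (L' : Matrix ι ι ℂ → Matrix κ κ ℂ) (M : Matrix (γ × ι) (γ × ι) ℂ) :
    tensorId18 L (tensorId18 L' M) = tensorId18 (L ∘ L') M :=
  rfl

theorem tensorId18_eq_self {ι : Type*} {L : Matrix ι ι ℂ → Matrix ι ι ℂ}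
    {M : Matrix (γ × ι) (γ × ι) ℂ}
    (h : ∀ a b, L (of fun i j => M (a, i) (b, j)) = of fun i j => M (a, i) (b, j)) :
    tensorId18 L M = M := by
  ext ⟨a, i⟩ ⟨b, j⟩
  rw [tensorId18_apply, h]
  rfl

theorem tensorId18_partialTraceRight {l r : Type*} [Fintype r]
    (M : Matrix (γ × (l × r)) (γ × (l × r)) ℂ) :
    tensorId18 (partialTraceRight l r) M =
      ∑ k, M.submatrix (fun p => (p.1, (p.2, k))) (fun p => (p.1, (p.2, k))) := by
  ext p q
  simp [tensorId18_apply, Matrix.sum_apply]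

theorem tensorId18_kroneckerRight {l r : Type*} (ω : Matrix r r ℂ)
    (M : Matrix (γ × l) (γ × l) ℂ) :
    tensorId18 (kroneckerRight ω) M =
      (M ⊗ₖ ω).submatrix (Equiv.prodAssoc γ l r).symm (Equiv.prodAssoc γ l r).symm :=
  rfl

theorem tensorId18_blockDiagonalMap {ι : Type*} [DecidableEq ι] {m n : ι → Type*}
    (Φ : ∀ i, Matrix (m i) (m i) ℂ →ₗ[ℂ] Matrix (n i) (n i) ℂ)
    (M : Matrix (γ × Σ i, m i) (γ × Σ i, m i) ℂ) :
    tensorId18 (blockDiagonalMap Φ) M =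
      (blockDiagonal' fun i => tensorId18 (Φ i)
          (M.submatrix (Prod.map id (Sigma.mk i)) (Prod.map id (Sigma.mk i)))).submatrix
        (fun p => ⟨p.2.1, (p.1, p.2.2)⟩) (fun p => ⟨p.2.1, (p.1, p.2.2)⟩) := by
  ext ⟨a, i, x⟩ ⟨b, j, y⟩
  obtain rfl | hij := eq_or_ne i j
  · rfl
  · rw [submatrix_apply, tensorId18_apply, blockDiagonalMap_apply,
      blockDiagonal'_apply_ne _ _ _ hij, blockDiagonal'_apply_ne _ _ _ hij]

theorem isCPTP18_partialTraceRight (l r : Type*) [Fintype l] [Fintype r] :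
    IsCPTP18 (partialTraceRight l r : Matrix (l × r) (l × r) ℂ →ₗ[ℂ] Matrix l l ℂ) :=
  ⟨trace_partialTraceRight, fun d M hM => by
    rw [tensorId18_partialTraceRight]
    exact posSemidef_sum _ fun k _ => hM.submatrix _⟩

theorem isCPTP18_kroneckerRight {l r : Type*} [Fintype l] [Fintype r] {ω : Matrix r r ℂ}
    (hω : ω.PosSemidef) (hω1 : ω.trace = 1) :
    IsCPTP18 (kroneckerRight ω : Matrix l l ℂ →ₗ[ℂ] Matrix (l × r) (l × r) ℂ) :=
  ⟨fun X => by simp [trace_kronecker, hω1], fun d M hM => by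
    rw [tensorId18_kroneckerRight]
    exact (hM.kronecker hω).submatrix _⟩

theorem IsCPTP18.blockDiagonalMap {ι : Type*} [Fintype ι] [DecidableEq ι] {m n : ι → Type*}
    [∀ i, Fintype (m i)] [∀ i, Fintype (n i)]
    {Φ : ∀ i, Matrix (m i) (m i) ℂ →ₗ[ℂ] Matrix (n i) (n i) ℂ}
    (hΦ : ∀ i, IsCPTP18 (Φ i)) :
    IsCPTP18 (blockDiagonalMap Φ) :=
  ⟨trace_blockDiagonalMap fun i => (hΦ i).1, fun d M hM => by
    rw [tensorId18_blockDiagonalMap]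
    exact (PosSemidef.blockDiagonal' fun i =>
      (hΦ i).2 d _ (hM.submatrix _)).submatrix _⟩

end CompletelyPositive

theorem stmt18 (dA : ℕ) (m : ℕ) (dL dR : Fin m → ℕ)
    (p : Fin m → ℝ)
    (ρ : (i : Fin m) → Matrix (Fin dA × Fin (dL i)) (Fin dA × Fin (dL i)) ℂ)
    (ω : (i : Fin m) → Matrix (Fin (dR i)) (Fin (dR i)) ℂ)
    (hωpsd : ∀ i, (ω i).PosSemidef) (hωtr : ∀ i, (ω i).trace = 1)
    (ρAB : Matrix (Fin dA × ((i : Fin m) × (Fin (dL i) × Fin (dR i))))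
                  (Fin dA × ((i : Fin m) × (Fin (dL i) × Fin (dR i)))) ℂ)
    (hρAB : ρAB = fun a b =>
      match a, b with
      | (aa, ⟨i, (l, r)⟩), (aa', ⟨j, (l', r')⟩) =>
        if h : j = i
        then (p i : ℂ) * ρ i (aa, l) (aa', Fin.cast (congrArg dL h) l') *
              ω i r (Fin.cast (congrArg dR h) r')
        else 0) :
    ∃ (E : Matrix ((i : Fin m) × (Fin (dL i) × Fin (dR i)))
              ((i : Fin m) × (Fin (dL i) × Fin (dR i))) ℂ →ₗ[ℂ]
            Matrix ((i : Fin m) × Fin (dL i)) ((i : Fin m) × Fin (dL i)) ℂ)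
      (R : Matrix ((i : Fin m) × Fin (dL i)) ((i : Fin m) × Fin (dL i)) ℂ →ₗ[ℂ]
            Matrix ((i : Fin m) × (Fin (dL i) × Fin (dR i)))
              ((i : Fin m) × (Fin (dL i) × Fin (dR i))) ℂ),
      IsCPTP18 E ∧ IsCPTP18 R ∧
        (∀ X, E X = fun q q' =>
          match q, q' with
          | ⟨i, l⟩, ⟨j, l'⟩ =>
            if h : j = i
            then ∑ r : Fin (dR i), X ⟨i, (l, r)⟩ ⟨i, (Fin.cast (congrArg dL h) l', r)⟩
            else 0) ∧
        (∀ Y, R Y = fun q q' =>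
          match q, q' with
          | ⟨i, (l, r)⟩, ⟨j, (l', r')⟩ =>
            if h : j = i
            then Y ⟨i, l⟩ ⟨i, Fin.cast (congrArg dL h) l'⟩ * ω i r (Fin.cast (congrArg dR h) r')
            else 0) ∧
        tensorId18 (fun X => R X) (tensorId18 (fun X => E X) ρAB) = ρAB := by
  have hblock : ∀ a a', (of fun x y => ρAB (a, x) (a', y)) =
      blockDiagonal' fun i =>
        ((p i : ℂ) • of fun l l' => ρ i (a, l) (a', l')) ⊗ₖ ω i := by
    intro a a'
    subst hρAB
    ext ⟨i, l, r⟩ ⟨j, l', r'⟩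
    obtain rfl | hij := eq_or_ne j i
    · simp [mul_assoc]
    · simp [blockDiagonal'_apply', hij, hij.symm]
  refine ⟨blockDiagonalMap fun _ => partialTraceRight _ _,
    blockDiagonalMap fun i => kroneckerRight (ω i),
    .blockDiagonalMap fun _ => isCPTP18_partialTraceRight _ _,
    .blockDiagonalMap fun i => isCPTP18_kroneckerRight (hωpsd i) (hωtr i), ?_, ?_, ?_⟩
  · intro X
    ext ⟨i, l⟩ ⟨j, l'⟩
    obtain rfl | hij := eq_or_ne j i
    · simp [blockDiagonalMap_apply, blockDiag'_apply]
    · simp [blockDiagonalMap_apply, blockDiagonal'_apply', hij, hij.symm]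
  · intro Y
    ext ⟨i, l, r⟩ ⟨j, l', r'⟩
    obtain rfl | hij := eq_or_ne j i
    · simp [blockDiagonalMap_apply, blockDiag'_apply]
    · simp [blockDiagonalMap_apply, blockDiagonal'_apply', hij, hij.symm]
  · rw [tensorId18_tensorId18]
    refine tensorId18_eq_self fun a a' => ?_
    rw [hblock]
    exact blockDiagonalMap_kroneckerRight_partialTraceRight hωtr _
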